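/- Let H be a finite simple graph with at least one edge that is both vertex-transitive and edge-transitive, with adjacency matrix A. If Z is any entrywise nonnegative, real symmetric positive semidefinite matrix with rows and columns indexed by V(H), then sum(Z) ≤ (1 + λ_max(H)/|λ_min(H)|) · sum((J − A) ∘ Z), where J is the all-ones matrix, ∘ denotes the entrywise (Schur) product, and sum(M) denotes the sum of all entries of M. -/

import Mathlib

open Matrix Finset

namespace SpectralFrac

variable {V : Type*}

/-- The real adjacency matrix of a simple graph is Hermitian. -/
theorem adjMatrix_isHermitian [Fintype V] [DecidableEq V] (G : SimpleGraph V)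
    [DecidableRel G.Adj] : (G.adjMatrix ℝ).IsHermitian := by
  rw [Matrix.IsHermitian, Matrix.conjTranspose_eq_transpose_of_trivial]
  exact G.isSymm_adjMatrix

/-- `s⁺(G)`: the sum of the squares of the positive eigenvalues of the adjacency matrix. -/
noncomputable def sPos [Fintype V] [DecidableEq V] (G : SimpleGraph V) [DecidableRel G.Adj] : ℝ :=
  ∑ i, if 0 < (adjMatrix_isHermitian G).eigenvalues i
    then ((adjMatrix_isHermitian G).eigenvalues i) ^ 2 else 0

/-- `s⁻(G)`: the sum of the squares of the negative eigenvalues of the adjacency matrix. -/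
noncomputable def sNeg [Fintype V] [DecidableEq V] (G : SimpleGraph V) [DecidableRel G.Adj] : ℝ :=
  ∑ i, if (adjMatrix_isHermitian G).eigenvalues i < 0
    then ((adjMatrix_isHermitian G).eigenvalues i) ^ 2 else 0

/-- The largest eigenvalue of the adjacency matrix of `G`. -/
noncomputable def lamMax [Fintype V] [DecidableEq V] (G : SimpleGraph V) [DecidableRel G.Adj] : ℝ :=
  ⨆ i, (adjMatrix_isHermitian G).eigenvalues i

/-- The smallest eigenvalue of the adjacency matrix of `G`. -/
noncomputable def lamMin [Fintype V] [DecidableEq V] (G : SimpleGraph V) [DecidableRel G.Adj] : ℝ :=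
  ⨅ i, (adjMatrix_isHermitian G).eigenvalues i

/-- A graph is edge-transitive if its automorphism group acts transitively on edges. -/
def IsEdgeTransitive (H : SimpleGraph V) : Prop :=
  ∀ ⦃u v x y : V⦄, H.Adj u v → H.Adj x y → ∃ π : H ≃g H, s(π u, π v) = s(x, y)

/-- A graph is vertex-transitive if its automorphism group acts transitively on vertices. -/
def IsVertexTransitive (H : SimpleGraph V) : Prop :=
  ∀ u v : V, ∃ π : H ≃g H, π u = v

/-- The Kneser graph `K_{n;k}`: vertices are `k`-subsets of an `n`-set, adjacent iff disjoint. -/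
def kneserGraph (n k : ℕ) : SimpleGraph {s : Finset (Fin n) // s.card = k} where
  Adj a b := a ≠ b ∧ Disjoint a.1 b.1
  symm := ⟨fun a b h => ⟨h.1.symm, h.2.symm⟩⟩
  loopless := ⟨fun a h => h.1 rfl⟩

instance kneserGraph.adjDecidable (n k : ℕ) : DecidableRel (kneserGraph n k).Adj :=
  fun a b => inferInstanceAs (Decidable (a ≠ b ∧ Disjoint a.1 b.1))

/-- The fractional chromatic number: the infimum of `n / k` over all pairs `(n, k)` such that
`G` admits a homomorphism into the Kneser graph `K_{n;k}`. -/
noncomputable def fracChromaticNumber (G : SimpleGraph V) : ℝ :=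
  sInf {q : ℝ | ∃ n k : ℕ, 0 < k ∧ Nonempty (G →g kneserGraph n k) ∧ q = (n : ℝ) / k}

/-- The automorphism group of `H`, as a finset of permutations of the vertices. -/
def autSet [Fintype V] [DecidableEq V] (H : SimpleGraph V) [DecidableRel H.Adj] :
    Finset (Equiv.Perm V) :=
  Finset.univ.filter fun π => ∀ u v, H.Adj (π u) (π v) ↔ H.Adj u v

end SpectralFrac

/-!
Let `x` be a unit vector with `xᵀ A x = λ_min` and average `x xᵀ` over the automorphism group:
`W = ∑_π (x ∘ π)(x ∘ π)ᵀ`. Then `∑ W ∘ Z ≥ 0` for every positive semidefinite `Z`. With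
`n = |V|`, `m = |Aut H|` and `d` the degree, vertex-transitivity makes the diagonal of `W`
constant, so `n W_uv ≤ m` everywhere, and edge-transitivity makes `W` constant on edges, where
`n d W_e = ∑ A ∘ W = m λ_min`. Hence `(n d / m) W ≤ λ_max J − (λ_max + |λ_min|) A` entrywise
(using `d ≤ λ_max`), and pairing with the entrywise nonnegative `Z` gives
`λ_max sum(Z) − (λ_max + |λ_min|) sum(A ∘ Z) ≥ 0`, which rearranges to the claim.
-/

namespace SpectralFrac

section Spectrum

variable {n : Type*} [Fintype n] [DecidableEq n] {A : Matrix n n ℝ}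

theorem le_iSup_eigenvalues_of_mulVec_eq_smul (hA : A.IsHermitian) {x : n → ℝ} {μ : ℝ}
    (hx : x ≠ 0) (hAx : A *ᵥ x = μ • x) : μ ≤ ⨆ i, hA.eigenvalues i := by
  have hμ : μ ∈ spectrum ℝ A := by
    rw [← Matrix.spectrum_toLin']
    exact Module.End.HasEigenvalue.mem_spectrum <| Module.End.hasEigenvalue_of_hasEigenvector
      ⟨Module.End.mem_eigenspace_iff.2 (by rwa [Matrix.toLin'_apply]), hx⟩
  obtain ⟨i, rfl⟩ := hA.spectrum_real_eq_range_eigenvalues ▸ hμ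
  exact le_ciSup (Set.finite_range _).bddAbove i

theorem exists_neg_eigenvalue_of_trace_eq_zero (hA : A.IsHermitian) (htr : A.trace = 0)
    (hA0 : A ≠ 0) : ∃ i, hA.eigenvalues i < 0 := by
  by_contra! hnonneg
  have hsum : ∑ i, hA.eigenvalues i = 0 := by simpa [htr] using hA.trace_eq_sum_eigenvalues.symm
  refine hA0 (hA.eigenvalues_eq_zero_iff.1 (funext fun i => ?_))
  exact (Finset.sum_eq_zero_iff_of_nonneg fun i _ => hnonneg i).1 hsum i (Finset.mem_univ i)

theorem exists_dotProduct_mulVec_eq_iInf_eigenvalues [Nonempty n] (hA : A.IsHermitian) :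
    ∃ x : n → ℝ, x ⬝ᵥ x = 1 ∧ x ⬝ᵥ A *ᵥ x = ⨅ i, hA.eigenvalues i := by
  obtain ⟨i, hi⟩ := exists_eq_ciInf_of_finite (f := hA.eigenvalues)
  refine ⟨hA.eigenvectorBasis i, ?_, ?_⟩
  · have := hA.eigenvectorBasis.inner_eq_one i
    rwa [EuclideanSpace.inner_eq_star_dotProduct, star_trivial] at this
  · simpa [hi] using (hA.eigenvalues_eq i).symm

end Spectrum

section Certificate

variable {V : Type*} [Fintype V]

theorem sum_le_one_add_div_mul_sum {A W Z : Matrix V V ℝ} {c L ν : ℝ} (hν : 0 < ν) (hc : 0 ≤ c)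
    (hZ : ∀ u v, 0 ≤ Z u v) (hWZ : 0 ≤ ∑ u, ∑ v, W u v * Z u v)
    (hW : ∀ u v, c * W u v ≤ L - (L + ν) * A u v) :
    ∑ u, ∑ v, Z u v ≤ (1 + L / ν) * ∑ u, ∑ v, (1 - A u v) * Z u v := by
  set S := ∑ u, ∑ v, Z u v
  set E := ∑ u, ∑ v, A u v * Z u v
  have hslack : 0 ≤ ∑ u, ∑ v, (L - (L + ν) * A u v - c * W u v) * Z u v :=
    Finset.sum_nonneg fun u _ => Finset.sum_nonneg fun v _ =>
      mul_nonneg (sub_nonneg.2 (hW u v)) (hZ u v)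
  have hexpand : ∑ u, ∑ v, (L - (L + ν) * A u v - c * W u v) * Z u v =
      L * S - (L + ν) * E - c * ∑ u, ∑ v, W u v * Z u v := by
    simp only [S, E, Finset.mul_sum, ← Finset.sum_sub_distrib]
    exact Finset.sum_congr rfl fun u _ => Finset.sum_congr rfl fun v _ => by ring
  have hcompl : ∑ u, ∑ v, (1 - A u v) * Z u v = S - E := by
    simp only [S, E, ← Finset.sum_sub_distrib]
    exact Finset.sum_congr rfl fun u _ => Finset.sum_congr rfl fun v _ => by ring
  have hkey : 0 ≤ (L * S - (L + ν) * E) / ν :=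
    div_nonneg (by linarith [mul_nonneg hc hWZ]) hν.le
  rw [hcompl]
  calc S ≤ S + (L * S - (L + ν) * E) / ν := le_add_of_nonneg_right hkey
    _ = (1 + L / ν) * (S - E) := by field_simp; ring

end Certificate

section Automorphisms

variable {V : Type*} [Fintype V] {H : SimpleGraph V} [DecidableRel H.Adj]

theorem IsVertexTransitive.isRegularOfDegree (hvt : IsVertexTransitive H) (u : V) :
    H.IsRegularOfDegree (H.degree u) := fun v => by
  obtain ⟨φ, rfl⟩ := hvt u v
  exact φ.degree_eq u

variable [DecidableEq V]

theorem lamMin_lt_zero (hH : H.edgeSet.Nonempty) : lamMin H < 0 := by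
  have hA0 : H.adjMatrix ℝ ≠ 0 := fun h0 => by
    obtain ⟨⟨u, v⟩, huv⟩ := hH
    exact absurd huv (by simpa using congrFun (congrFun h0 u) v)
  obtain ⟨i, hi⟩ := exists_neg_eigenvalue_of_trace_eq_zero (adjMatrix_isHermitian H)
    (H.trace_adjMatrix ℝ) hA0
  exact (ciInf_le (Set.finite_range _).bddBelow i).trans_lt hi

theorem degree_le_lamMax [Nonempty V] {d : ℕ} (hd : H.IsRegularOfDegree d) :
    (d : ℝ) ≤ lamMax H :=
  le_iSup_eigenvalues_of_mulVec_eq_smul _ (x := Function.const V 1) (by simp)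
    (funext fun v => by simp [hd v])

theorem mem_autSet_iff {π : Equiv.Perm V} :
    π ∈ autSet H ↔ ∀ u v, H.Adj (π u) (π v) ↔ H.Adj u v := by
  simp [autSet]

theorem one_mem_autSet : (1 : Equiv.Perm V) ∈ autSet H := by
  simp [mem_autSet_iff]

theorem mul_mem_autSet {π σ : Equiv.Perm V} (hπ : π ∈ autSet H) (hσ : σ ∈ autSet H) :
    π * σ ∈ autSet H := by
  rw [mem_autSet_iff] at *
  intro u v
  rw [Equiv.Perm.mul_apply, Equiv.Perm.mul_apply, hπ, hσ]

theorem inv_mem_autSet {σ : Equiv.Perm V} (hσ : σ ∈ autSet H) : σ⁻¹ ∈ autSet H := by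
  rw [mem_autSet_iff] at *
  intro u v
  simpa using (hσ (σ⁻¹ u) (σ⁻¹ v)).symm

theorem toEquiv_mem_autSet (φ : H ≃g H) : φ.toEquiv ∈ autSet H :=
  mem_autSet_iff.2 fun _ _ => φ.map_adj_iff

theorem adjMatrix_submatrix_of_mem_autSet {π : Equiv.Perm V} (hπ : π ∈ autSet H) :
    (H.adjMatrix ℝ).submatrix π π = H.adjMatrix ℝ := by
  ext u v
  simp [mem_autSet_iff.1 hπ u v]

theorem sum_autSet_mul_right {M : Type*} [AddCommMonoid M] {σ : Equiv.Perm V}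
    (hσ : σ ∈ autSet H) (F : Equiv.Perm V → M) :
    ∑ π ∈ autSet H, F (π * σ) = ∑ π ∈ autSet H, F π :=
  Finset.sum_equiv (Equiv.mulRight σ)
    (fun π => ⟨fun h => mul_mem_autSet h hσ,
      fun h => by simpa using mul_mem_autSet h (inv_mem_autSet hσ)⟩) fun _ _ => rfl

end Automorphisms

section OrbitGram

variable {V : Type*}

def orbitGram (G : Finset (Equiv.Perm V)) (x : V → ℝ) : Matrix V V ℝ :=
  ∑ π ∈ G, vecMulVec (x ∘ π) (x ∘ π)

variable {G : Finset (Equiv.Perm V)} {x : V → ℝ}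

theorem orbitGram_apply (u v : V) : orbitGram G x u v = ∑ π ∈ G, x (π u) * x (π v) := by
  simp [orbitGram, Matrix.sum_apply, vecMulVec_apply]

theorem orbitGram_comm (u v : V) : orbitGram G x u v = orbitGram G x v u := by
  simp only [orbitGram_apply, mul_comm]

theorem orbitGram_apply_le (u v : V) :
    orbitGram G x u v ≤ (orbitGram G x u u + orbitGram G x v v) / 2 := by
  simp only [orbitGram_apply, ← Finset.sum_add_distrib, Finset.sum_div]
  exact Finset.sum_le_sum fun π _ => by nlinarith [sq_nonneg (x (π u) - x (π v))]

variable [Fintype V]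

theorem sum_orbitGram_self : ∑ u, orbitGram G x u u = G.card * (x ⬝ᵥ x) := by
  simp only [orbitGram_apply]
  rw [Finset.sum_comm, Finset.sum_congr rfl fun π _ => Equiv.sum_comp π fun v => x v * x v]
  simp [dotProduct]

theorem sum_mul_orbitGram (M : Matrix V V ℝ) :
    ∑ u, ∑ v, M u v * orbitGram G x u v = ∑ π ∈ G, (x ∘ π) ⬝ᵥ M *ᵥ (x ∘ π) := by
  simp only [orbitGram_apply, dotProduct, mulVec, Function.comp_apply, Finset.mul_sum]
  calc _ = ∑ u, ∑ π ∈ G, ∑ v, M u v * (x (π u) * x (π v)) :=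
        Finset.sum_congr rfl fun u _ => Finset.sum_comm
    _ = _ := Finset.sum_comm.trans <| Finset.sum_congr rfl fun π _ =>
        Finset.sum_congr rfl fun u _ => Finset.sum_congr rfl fun v _ => by ring

theorem sum_orbitGram_mul_nonneg {Z : Matrix V V ℝ} (hZ : Z.PosSemidef) :
    0 ≤ ∑ u, ∑ v, orbitGram G x u v * Z u v := by
  simp_rw [mul_comm (orbitGram G x _ _)]
  rw [sum_mul_orbitGram]
  exact Finset.sum_nonneg fun π _ => by simpa using hZ.dotProduct_mulVec_nonneg (x ∘ π)

variable [DecidableEq V] {H : SimpleGraph V} [DecidableRel H.Adj]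

theorem orbitGram_autSet_apply_perm {σ : Equiv.Perm V} (hσ : σ ∈ autSet H) (u v : V) :
    orbitGram (autSet H) x (σ u) (σ v) = orbitGram (autSet H) x u v := by
  simp only [orbitGram_apply]
  exact sum_autSet_mul_right hσ fun π => x (π u) * x (π v)

theorem sum_adjMatrix_mul_orbitGram_autSet :
    ∑ u, ∑ v, H.adjMatrix ℝ u v * orbitGram (autSet H) x u v =
      (autSet H).card * (x ⬝ᵥ H.adjMatrix ℝ *ᵥ x) := by
  rw [sum_mul_orbitGram, ← nsmul_eq_mul, ← Finset.sum_const]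
  refine Finset.sum_congr rfl fun π hπ => ?_
  conv_lhs => rw [← adjMatrix_submatrix_of_mem_autSet hπ, submatrix_mulVec_equiv]
  simp [Function.comp_assoc]

end OrbitGram

section Transitive

variable {V : Type*} [Fintype V] [DecidableEq V] {H : SimpleGraph V} [DecidableRel H.Adj]
  {x : V → ℝ}

theorem IsVertexTransitive.card_mul_orbitGram_self (hvt : IsVertexTransitive H) (u : V) :
    Fintype.card V * orbitGram (autSet H) x u u = (autSet H).card * (x ⬝ᵥ x) := by
  have hconst : ∀ v, orbitGram (autSet H) x v v = orbitGram (autSet H) x u u := fun v => by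
    obtain ⟨φ, rfl⟩ := hvt u v
    exact orbitGram_autSet_apply_perm (toEquiv_mem_autSet φ) u u
  simp [← sum_orbitGram_self, hconst]

theorem IsVertexTransitive.card_mul_orbitGram_le (hvt : IsVertexTransitive H) (u v : V) :
    Fintype.card V * orbitGram (autSet H) x u v ≤ (autSet H).card * (x ⬝ᵥ x) := by
  have := mul_le_mul_of_nonneg_left (orbitGram_apply_le (G := autSet H) (x := x) u v)
    (Nat.cast_nonneg (α := ℝ) (Fintype.card V))
  linarith [hvt.card_mul_orbitGram_self (x := x) u, hvt.card_mul_orbitGram_self (x := x) v]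

theorem IsEdgeTransitive.orbitGram_eq_of_adj (het : IsEdgeTransitive H) {u v u' v' : V}
    (h : H.Adj u v) (h' : H.Adj u' v') :
    orbitGram (autSet H) x u v = orbitGram (autSet H) x u' v' := by
  obtain ⟨φ, hφ⟩ := het h h'
  rcases Sym2.eq_iff.1 hφ with ⟨rfl, rfl⟩ | ⟨rfl, rfl⟩
  · exact (orbitGram_autSet_apply_perm (toEquiv_mem_autSet φ) u v).symm
  · exact (orbitGram_autSet_apply_perm (toEquiv_mem_autSet φ) u v).symm.trans
      (orbitGram_comm _ _)

theorem IsEdgeTransitive.card_mul_degree_mul_orbitGram_of_adj (het : IsEdgeTransitive H) {d : ℕ}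
    (hd : H.IsRegularOfDegree d) {u v : V} (huv : H.Adj u v) :
    Fintype.card V * d * orbitGram (autSet H) x u v =
      (autSet H).card * (x ⬝ᵥ H.adjMatrix ℝ *ᵥ x) := by
  rw [← sum_adjMatrix_mul_orbitGram_autSet]
  have hedge : ∀ a b, H.adjMatrix ℝ a b * orbitGram (autSet H) x a b =
      H.adjMatrix ℝ a b * orbitGram (autSet H) x u v := fun a b => by
    by_cases hab : H.Adj a b
    · rw [het.orbitGram_eq_of_adj hab huv]
    · simp [hab]
  have hrow : ∀ a, ∑ b, H.adjMatrix ℝ a b = d := fun a => by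
    simpa [mulVec, dotProduct] using
      SimpleGraph.adjMatrix_mulVec_const_apply_of_regular (α := ℝ) (a := 1) hd (v := a)
  simp_rw [hedge, ← Finset.sum_mul, hrow]
  simp

-- On an edge both sides equal `xᵀ A x`; off the edges the left side is at most `deg ≤ L`.
theorem orbitGram_le_of_transitive (hvt : IsVertexTransitive H) (het : IsEdgeTransitive H)
    {u₀ v₀ : V} (huv : H.Adj u₀ v₀) (hx : x ⬝ᵥ x = 1) {L : ℝ}
    (hL : H.degree u₀ ≤ L) (u v : V) :
    Fintype.card V * H.degree u₀ / (autSet H).card * orbitGram (autSet H) x u v ≤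
      L - (L - x ⬝ᵥ H.adjMatrix ℝ *ᵥ x) * H.adjMatrix ℝ u v := by
  have hm : (0 : ℝ) < (autSet H).card := by
    exact_mod_cast Finset.card_pos.2 ⟨1, one_mem_autSet⟩
  rw [div_mul_eq_mul_div, div_le_iff₀ hm]
  by_cases huv' : H.Adj u v
  · have := het.card_mul_degree_mul_orbitGram_of_adj (x := x) (hvt.isRegularOfDegree u₀) huv
    rw [het.orbitGram_eq_of_adj huv' huv, SimpleGraph.adjMatrix_apply, if_pos huv']
    linarith
  · have := mul_le_mul_of_nonneg_left (hvt.card_mul_orbitGram_le (x := x) u v)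
      (Nat.cast_nonneg (α := ℝ) (H.degree u₀))
    rw [hx, mul_one] at this
    rw [SimpleGraph.adjMatrix_apply, if_neg huv']
    nlinarith [mul_le_mul_of_nonneg_right hL hm.le]

end Transitive

end SpectralFrac

/-- **Lemma.** Let `H` be vertex- and edge-transitive with an edge and adjacency matrix `A`.
For any entrywise nonnegative real symmetric PSD matrix `Z` indexed by `V(H)`,
`sum(Z) ≤ (1 + λ_max(H)/|λ_min(H)|) · sum((J − A) ∘ Z)`. -/
theorem SpectralFrac.nonneg_psd_sum_bound {V : Type*} [Fintype V] [DecidableEq V]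
    (H : SimpleGraph V) [DecidableRel H.Adj]
    (hHe : H.edgeSet.Nonempty) (hvt : IsVertexTransitive H) (het : IsEdgeTransitive H)
    (Z : Matrix V V ℝ) (hZnn : ∀ u v, 0 ≤ Z u v) (hZpsd : Z.PosSemidef) :
    ∑ u, ∑ v, Z u v ≤
      (1 + lamMax H / |lamMin H|) * ∑ u, ∑ v, (1 - H.adjMatrix ℝ u v) * Z u v := by
  have hneg := lamMin_lt_zero hHe
  obtain ⟨⟨u₀, v₀⟩, huv⟩ := hHe
  have : Nonempty V := ⟨u₀⟩
  obtain ⟨x, hxx, hxA⟩ :=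
    exists_dotProduct_mulVec_eq_iInf_eigenvalues (adjMatrix_isHermitian H)
  refine sum_le_one_add_div_mul_sum (c := Fintype.card V * H.degree u₀ / (autSet H).card)
    (abs_pos.2 hneg.ne) (by positivity) hZnn
    (sum_orbitGram_mul_nonneg (G := autSet H) (x := x) hZpsd) fun u v => ?_
  have := orbitGram_le_of_transitive hvt het huv hxx
    (degree_le_lamMax (hvt.isRegularOfDegree u₀)) u v
  rw [abs_of_neg hneg, ← sub_eq_add_neg]
  rwa [hxA, ← lamMin] at this
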